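/- Let S_L = {a₁, …, a_m} be a finite set of positive integers with gcd(a₁+1, …, a_m+1) = 1, and S_R = {1}. Then the partizan subtraction game (S_L, S_R) is strongly dominated by Left: there exists n₀ such that for all n ≥ n₀, the outcome of n is L. -/

import Mathlib

mutual
def LeftFirstWins (SL SR : Finset ℕ) : ℕ → Prop
  | n => ∃ s ∈ SL, ∃ (_ : 0 < s) (_ : s ≤ n), ¬ RightFirstWins SL SR (n - s)
  termination_by n => n
  decreasing_by omega
def RightFirstWins (SL SR : Finset ℕ) : ℕ → Prop
  | n => ∃ s ∈ SR, ∃ (_ : 0 < s) (_ : s ≤ n), ¬ LeftFirstWins SL SR (n - s)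
  termination_by n => n
  decreasing_by omega
end

inductive Outcome | P | L | R | N
deriving DecidableEq

open Classical in
noncomputable def outcome (SL SR : Finset ℕ) (n : ℕ) : Outcome :=
  if LeftFirstWins SL SR n then
    if RightFirstWins SL SR n then .N else .L
  else
    if RightFirstWins SL SR n then .R else .P

lemma LFW_iff (SL : Finset ℕ) (n : ℕ) :
    LeftFirstWins SL {1} n ↔ ∃ s ∈ SL, 0 < s ∧ s ≤ n ∧ ¬ RightFirstWins SL {1} (n - s) := by
  rw [LeftFirstWins]
  constructor
  · rintro ⟨s, hs, h1, h2, h3⟩; exact ⟨s, hs, h1, h2, h3⟩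
  · rintro ⟨s, hs, h1, h2, h3⟩; exact ⟨s, hs, h1, h2, h3⟩

lemma RFW_iff (SL : Finset ℕ) (n : ℕ) :
    RightFirstWins SL {1} n ↔ (0 < n ∧ ¬ LeftFirstWins SL {1} (n - 1)) := by
  rw [RightFirstWins]
  constructor
  · rintro ⟨s, hs, h1, h2, h3⟩
    simp only [Finset.mem_singleton] at hs
    subst hs; exact ⟨h2, h3⟩
  · rintro ⟨h2, h3⟩
    exact ⟨1, by simp, one_pos, h2, h3⟩

/-- Bezout-type lemma for the additive submonoid generated by a finite set. -/
lemma bezout_closure (T : Finset ℕ) :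
    ∃ x y : ℕ, x ∈ AddSubmonoid.closure (T : Set ℕ) ∧
      y ∈ AddSubmonoid.closure (T : Set ℕ) ∧ x = y + T.gcd id := by
  classical
  induction T using Finset.induction with
  | empty => exact ⟨0, 0, zero_mem _, zero_mem _, by simp⟩
  | @insert a T ha ih =>
    obtain ⟨x₀, y₀, hx₀, hy₀, hxy⟩ := ih
    have hmono : AddSubmonoid.closure (T : Set ℕ) ≤
        AddSubmonoid.closure ((insert a T : Finset ℕ) : Set ℕ) := by
      apply AddSubmonoid.closure_mono
      intro t ht
      simp only [Finset.coe_insert, Set.mem_insert_iff]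
      exact Or.inr ht
    have hamem : a ∈ AddSubmonoid.closure ((insert a T : Finset ℕ) : Set ℕ) := by
      apply AddSubmonoid.subset_closure
      simp
    rw [Finset.gcd_insert]
    set g := T.gcd id with hg
    rcases Nat.eq_zero_or_pos g with hg0 | hgpos
    · -- gcd a 0 = a
      refine ⟨x₀ + a, y₀, add_mem (hmono hx₀) hamem, hmono hy₀, ?_⟩
      rw [hg0] at hxy
      have h1 : gcd (id a) (0:ℕ) = a := Nat.gcd_zero_right a
      rw [hg0, h1]
      omega
    rcases Nat.eq_zero_or_pos a with ha0 | hapos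
    · -- gcd 0 g = g
      refine ⟨x₀, y₀, hmono hx₀, hmono hy₀, ?_⟩
      have h1 : gcd (id a) g = g := by rw [ha0]; exact Nat.gcd_zero_left g
      rw [h1]
      omega
    · -- both positive: genuine Bezout step
      set d := Nat.gcd a g with hd
      have hdgcd : gcd (id a) g = d := rfl
      have hbez : (d : ℤ) = a * Nat.gcdA a g + g * Nat.gcdB a g := Nat.gcd_eq_gcd_ab a g
      set u : ℤ := Nat.gcdA a g
      set v : ℤ := Nat.gcdB a g
      set k : ℕ := u.natAbs + 1
      have hu' : (1 : ℤ) ≤ u + k * g := by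
        have h1 : (u.natAbs : ℤ) + u ≥ 0 := by
          rcases Int.natAbs_eq u with h | h <;> omega
        have h2 : (k : ℤ) * g ≥ (k : ℤ) := by
          have : (1:ℤ) ≤ (g:ℤ) := by exact_mod_cast hgpos
          nlinarith [Int.ofNat_nonneg k]
        have : (k : ℤ) = (u.natAbs : ℤ) + 1 := by simp [k]
        omega
      set u' : ℤ := u + k * g with hu'def
      set w : ℤ := k * a - v with hwdef
      have hkey : (a : ℤ) * u' - (g : ℤ) * w = d := by
        rw [hu'def, hwdef]; ring_nf; linarith [hbez]
      have hdle : (d : ℤ) ≤ a := by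
        have : d ≤ a := Nat.gcd_le_left g hapos
        exact_mod_cast this
      have hwpos : 0 ≤ w := by
        have hga : (g : ℤ) * w = a * u' - d := by linarith
        have h1 : (1:ℤ) ≤ (a:ℤ) := by exact_mod_cast hapos
        have h2 : (1:ℤ) ≤ (g:ℤ) := by exact_mod_cast hgpos
        have h3 : (a:ℤ) * u' ≥ a := by nlinarith
        nlinarith
      set U : ℕ := u'.toNat
      set W : ℕ := w.toNat
      have hUcast : (U : ℤ) = u' := Int.toNat_of_nonneg (by linarith)
      have hWcast : (W : ℤ) = w := Int.toNat_of_nonneg hwpos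
      rw [hdgcd]
      refine ⟨U * a + W * y₀, W * x₀, ?_, ?_, ?_⟩
      · refine add_mem ?_ ?_
        · rw [show U * a = U • a from (smul_eq_mul _ _).symm]
          exact AddSubmonoid.nsmul_mem _ hamem U
        · rw [show W * y₀ = W • y₀ from (smul_eq_mul _ _).symm]
          exact AddSubmonoid.nsmul_mem _ (hmono hy₀) W
      · rw [show W * x₀ = W • x₀ from (smul_eq_mul _ _).symm]
        exact AddSubmonoid.nsmul_mem _ (hmono hx₀) W
      · -- U * a + W * y₀ = W * x₀ + d
        have hx₀' : (x₀ : ℤ) = y₀ + g := by exact_mod_cast hxy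
        have : (U : ℤ) * a + W * y₀ = W * x₀ + d := by
          rw [hUcast, hWcast, hx₀']
          ring_nf
          ring_nf at hkey
          linarith
        exact_mod_cast this

/-- Cofiniteness: a submonoid of ℕ containing consecutive elements y and y+1
is cofinite: all n ≥ y*y belong. -/
lemma cofinite_of_consecutive (M : AddSubmonoid ℕ) (y : ℕ) (hy : y ∈ M) (hy1 : y + 1 ∈ M) :
    ∀ n, y * y ≤ n → n ∈ M := by
  intro n hn
  rcases Nat.eq_zero_or_pos y with h0 | hpos
  · -- 1 ∈ M, so n = n • 1 ∈ M
    subst h0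
    have : n = n • (0 + 1 : ℕ) := by simp
    rw [this]
    exact AddSubmonoid.nsmul_mem _ hy1 n
  · set q := n / y
    set r := n % y
    have hr : r < y := Nat.mod_lt _ hpos
    have hqr : n = q * y + r := by rw [mul_comm]; exact (Nat.div_add_mod n y).symm
    have hq : y ≤ q := by
      have := Nat.div_le_div_right (c := y) hn
      rwa [Nat.mul_div_cancel _ hpos] at this
    have hdecomp : n = (q - r) * y + r * (y + 1) := by
      have : r ≤ q := by omega
      obtain ⟨c, hc⟩ := Nat.le.dest this
      rw [show q - r = c from by omega, hqr, ← hc]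
      ring
    rw [hdecomp]
    refine add_mem ?_ ?_
    · rw [show (q - r) * y = (q - r) • y from (smul_eq_mul _ _).symm]
      exact AddSubmonoid.nsmul_mem _ hy _
    · rw [show r * (y + 1) = r • (y + 1) from (smul_eq_mul _ _).symm]
      exact AddSubmonoid.nsmul_mem _ hy1 _

theorem stmt_8 (SL : Finset ℕ) (hne : SL.Nonempty) (hpos : ∀ s ∈ SL, 0 < s)
    (hgcd : SL.gcd (· + 1) = 1) :
    ∃ n₀ : ℕ, ∀ n ≥ n₀, outcome SL {1} n = .L := by
  classical
  set T : Finset ℕ := SL.image (· + 1) with hT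
  have hTgcd : T.gcd id = 1 := by
    rw [hT, Finset.gcd_image]
    exact hgcd
  set M := AddSubmonoid.closure (T : Set ℕ) with hM
  obtain ⟨x, y, hx, hyM, hxy⟩ := bezout_closure T
  rw [hTgcd] at hxy
  subst hxy
  -- every n ≥ y*y is in M
  have hcof : ∀ n, y * y ≤ n → n ∈ M := cofinite_of_consecutive M y hyM hx
  -- key: for k ∈ M and a ∈ SL, LeftFirstWins (a + k)
  have key : ∀ k ∈ M, ∀ a ∈ SL, LeftFirstWins SL {1} (a + k) := by
    intro k hk
    induction hk using AddSubmonoid.closure_induction_left with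
    | zero =>
      intro a ha
      rw [LFW_iff]
      refine ⟨a, ha, hpos a ha, by omega, ?_⟩
      rw [RFW_iff]
      simp
    | add_left g hg m hm ih =>
      intro a ha
      obtain ⟨b, hb, hbg⟩ := Finset.mem_image.mp hg
      rw [LFW_iff]
      refine ⟨a, ha, hpos a ha, by omega, ?_⟩
      rw [RFW_iff]
      push_neg
      intro _
      have : a + (g + m) - a - 1 = b + m := by omega
      rw [show a + (g + m) - a = g + m from by omega, show g + m - 1 = b + m from by omega]
      exact ih b hb
  obtain ⟨a₀, ha₀⟩ := hne
  refine ⟨a₀ + y * y + 1, fun n hn => ?_⟩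
  have hLn : LeftFirstWins SL {1} n := by
    have : n - a₀ ∈ M := hcof _ (by omega)
    have := key _ this a₀ ha₀
    rwa [show a₀ + (n - a₀) = n from by omega] at this
  have hLn1 : LeftFirstWins SL {1} (n - 1) := by
    have : n - 1 - a₀ ∈ M := hcof _ (by omega)
    have := key _ this a₀ ha₀
    rwa [show a₀ + (n - 1 - a₀) = n - 1 from by omega] at this
  have hRn : ¬ RightFirstWins SL {1} n := by
    rw [RFW_iff]
    push_neg
    intro _
    exact hLn1
  unfold outcome
  rw [if_pos hLn, if_neg hRn]
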